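/- Every f^[α] ∈ I^[Σ] with s(α) ≺ σ s-reduces to zero by G^[Σ] if and only if every nonzero f^[α] ∈ I^[Σ] with s(α) ≺ σ is top s-reducible by G^[Σ]. (Equivalent characterization of labelled Gröbner bases up to a signature.) -/

import Mathlib

open Finsupp

/-- The free algebra `K⟨X⟩`, realized as the monoid algebra of the free monoid. -/
abbrev FreeAlg (K X : Type*) [Field K] := MonoidAlgebra K (FreeMonoid X)

/-- Module monomials `a εᵢ b` of the free bimodule of rank `r`. -/
structure MonMod (X : Type*) (r : ℕ) where
  left : FreeMonoid X
  idx : Fin r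
  right : FreeMonoid X

/-- The free bimodule `Σ = (K⟨X⟩ ⊗ K⟨X⟩)^r`, realized as the span of module monomials. -/
abbrev FreeBimod (K X : Type*) [Field K] (r : ℕ) := MonMod X r →₀ K

/-- Two-sided action of a pair of words on a module monomial: `a·(c εᵢ d)·b = (ac) εᵢ (db)`. -/
def act {X : Type*} {r : ℕ} (a b : FreeMonoid X) (μ : MonMod X r) : MonMod X r :=
  ⟨a * μ.left, μ.idx, μ.right * b⟩

/-- The monomial `w` as an element of the free algebra. -/
noncomputable def mon (K : Type*) [Field K] {X : Type*} (w : FreeMonoid X) : FreeAlg K X :=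
  MonoidAlgebra.of K (FreeMonoid X) w

/-- The evaluation homomorphism `Σ → K⟨X⟩`, `εᵢ ↦ fᵢ`. -/
noncomputable def evalS {K X : Type*} [Field K] {r : ℕ} (F : Fin r → FreeAlg K X)
    (α : FreeBimod K X r) : FreeAlg K X :=
  α.sum fun μ c => c • (mon K μ.left * F μ.idx * mon K μ.right)

section Orders

variable {K X : Type*} [Field K] [LinearOrder (FreeMonoid X)] {r : ℕ}
  [LinearOrder (MonMod X r)]

/-- The signature of a module element: the largest module monomial of its support
(`⊥` for the zero element). -/
noncomputable def sigW (α : FreeBimod K X r) : WithBot (MonMod X r) := α.support.max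

/-- The leading monomial of a nonzero polynomial (junk value `1` for `0`). -/
noncomputable def lmon (p : FreeAlg K X) : FreeMonoid X :=
  if h : p.coeff.support.Nonempty then p.coeff.support.max' h else 1

/-- The leading coefficient. -/
noncomputable def lcoeff (p : FreeAlg K X) : K := p.coeff (lmon p)

/-- The leading term. -/
noncomputable def lterm (p : FreeAlg K X) : FreeAlg K X :=
  MonoidAlgebra.single (lmon p) (lcoeff p)

/-- `f^[α]` is top s-reducible by the set `G^[Σ]`. -/
def TopSRed (G : Set (FreeAlg K X × FreeBimod K X r)) (f : FreeAlg K X)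
    (α : FreeBimod K X r) : Prop :=
  ∃ g γ, (g, γ) ∈ G ∧ g ≠ 0 ∧ ∃ a b : FreeMonoid X,
    a * lmon g * b = lmon f ∧ WithBot.map (act a b) (sigW γ) ≤ sigW α

/-- `f^[α]` is singular top s-reducible by `G^[Σ]`. -/
def SingTopSRed (G : Set (FreeAlg K X × FreeBimod K X r)) (f : FreeAlg K X)
    (α : FreeBimod K X r) : Prop :=
  f ≠ 0 ∧ ∃ g γ, (g, γ) ∈ G ∧ g ≠ 0 ∧ ∃ a b : FreeMonoid X,
    a * lmon g * b = lmon f ∧ WithBot.map (act a b) (sigW γ) = sigW α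

/-- `f^[α]` admits a regular s-reduction by `G^[Σ]`. -/
def RegSRedible (G : Set (FreeAlg K X × FreeBimod K X r)) (f : FreeAlg K X)
    (α : FreeBimod K X r) : Prop :=
  ∃ g γ, (g, γ) ∈ G ∧ g ≠ 0 ∧ ∃ a b : FreeMonoid X,
    a * lmon g * b ∈ f.coeff.support ∧ WithBot.map (act a b) (sigW γ) < sigW α

/-- `f^[α]` admits a regular *top* s-reduction by `G^[Σ]`. -/
def RegTopSRedible (G : Set (FreeAlg K X × FreeBimod K X r)) (f : FreeAlg K X)
    (α : FreeBimod K X r) : Prop :=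
  f ≠ 0 ∧ ∃ g γ, (g, γ) ∈ G ∧ g ≠ 0 ∧ ∃ a b : FreeMonoid X,
    a * lmon g * b = lmon f ∧ WithBot.map (act a b) (sigW γ) < sigW α

/-- Result of one s-reduction step of `f^[α]` by `a g^[γ] b`. -/
noncomputable def sredResult (f : FreeAlg K X) (α : FreeBimod K X r)
    (g : FreeAlg K X) (γ : FreeBimod K X r) (a b : FreeMonoid X) :
    FreeAlg K X × FreeBimod K X r :=
  (f - (f.coeff (a * lmon g * b) * (lcoeff g)⁻¹) • (mon K a * g * mon K b),
   α - (f.coeff (a * lmon g * b) * (lcoeff g)⁻¹) • Finsupp.mapDomain (act a b) γ)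

/-- One s-reduction step by `G^[Σ]`. -/
def SRedStep (G : Set (FreeAlg K X × FreeBimod K X r))
    (p q : FreeAlg K X × FreeBimod K X r) : Prop :=
  ∃ g γ, (g, γ) ∈ G ∧ g ≠ 0 ∧ ∃ a b : FreeMonoid X,
    a * lmon g * b ∈ p.1.coeff.support ∧ WithBot.map (act a b) (sigW γ) ≤ sigW p.2 ∧
    q = sredResult p.1 p.2 g γ a b

/-- One *regular* s-reduction step by `G^[Σ]`. -/
def RegSRedStep (G : Set (FreeAlg K X × FreeBimod K X r))
    (p q : FreeAlg K X × FreeBimod K X r) : Prop :=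
  ∃ g γ, (g, γ) ∈ G ∧ g ≠ 0 ∧ ∃ a b : FreeMonoid X,
    a * lmon g * b ∈ p.1.coeff.support ∧ WithBot.map (act a b) (sigW γ) < sigW p.2 ∧
    q = sredResult p.1 p.2 g γ a b

/-- `p` s-reduces to zero by `G^[Σ]`. -/
def SRedToZero (G : Set (FreeAlg K X × FreeBimod K X r))
    (p : FreeAlg K X × FreeBimod K X r) : Prop :=
  ∃ σ : FreeBimod K X r, Relation.ReflTransGen (SRedStep G) p (0, σ)

/-- `p` regular s-reduces to zero by `G^[Σ]`. -/
def RegSRedToZero (G : Set (FreeAlg K X × FreeBimod K X r))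
    (p : FreeAlg K X × FreeBimod K X r) : Prop :=
  ∃ σ : FreeBimod K X r, Relation.ReflTransGen (RegSRedStep G) p (0, σ)

/-- `G^[Σ] ⊆ I^[Σ]`: labelled polynomials with nonzero polynomial part. -/
def InLab (F : Fin r → FreeAlg K X) (G : Set (FreeAlg K X × FreeBimod K X r)) : Prop :=
  ∀ p ∈ G, p.1 = evalS F p.2 ∧ p.1 ≠ 0

/-- `G^[Σ]` is a labelled Gröbner basis of `I^[Σ]`. -/
def LabGB (F : Fin r → FreeAlg K X) (G : Set (FreeAlg K X × FreeBimod K X r)) : Prop :=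
  InLab F G ∧ ∀ (f : FreeAlg K X) (α : FreeBimod K X r), f = evalS F α → SRedToZero G (f, α)

/-- `G^[Σ]` is a labelled Gröbner basis of `I^[Σ]` up to signature `σ`. -/
def LabGBUpTo (F : Fin r → FreeAlg K X) (G : Set (FreeAlg K X × FreeBimod K X r))
    (σ : MonMod X r) : Prop :=
  InLab F G ∧ ∀ (f : FreeAlg K X) (α : FreeBimod K X r), f = evalS F α →
    sigW α < (σ : WithBot (MonMod X r)) → SRedToZero G (f, α)

/-- `G^[Σ]` is a *minimal* labelled Gröbner basis of `I^[Σ]`. -/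
def MinLabGB (F : Fin r → FreeAlg K X) (G : Set (FreeAlg K X × FreeBimod K X r)) : Prop :=
  LabGB F G ∧ ∀ p ∈ G, ¬ TopSRed (G \ {p}) p.1 p.2

end Orders

/-!
Along an s-reduction chain to zero the signature never increases, and a step that does not
touch the leading monomial of the polynomial part leaves it in place; so the leading monomial
of `f` must be cancelled by some step, and that step is a top s-reduction of `f^[α]`.
Conversely, a top s-reduction of `f^[α] ∈ I^[Σ]` by `G^[Σ] ⊆ I^[Σ]` stays in `I^[Σ]`, does
not raise the signature and strictly lowers the leading monomial, so by well-foundedness of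
the monomial order iterating it reaches zero.
-/

open MonoidAlgebra

section Algebra

variable {K X : Type*} [Field K] {r : ℕ}

lemma coeff_mon_mul_mul_mon (a b u : FreeMonoid X) (g : FreeAlg K X) :
    (mon K a * g * mon K b).coeff (a * u * b) = g.coeff u := by
  simp only [mon, of_apply, coeff_mul_single_mul, coeff_single_mul_mul, one_mul, mul_one]

lemma exists_of_mem_support_mon_mul_mul_mon {a b t : FreeMonoid X} {g : FreeAlg K X}
    (ht : t ∈ (mon K a * g * mon K b).coeff.support) :
    ∃ u ∈ g.coeff.support, a * u * b = t := by
  rw [mon, mon, of_apply, of_apply, support_coeff_mul_single _ _ (fun _ => by simp),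
    Finset.mem_map] at ht
  obtain ⟨s, hs, rfl⟩ := ht
  rw [support_coeff_single_mul _ _ (fun _ => by simp), Finset.mem_map] at hs
  obtain ⟨u, hu, rfl⟩ := hs
  exact ⟨u, hu, rfl⟩

lemma evalS_eq_linearCombination (F : Fin r → FreeAlg K X) (α : FreeBimod K X r) :
    evalS F α = Finsupp.linearCombination K
      (fun μ : MonMod X r => mon K μ.left * F μ.idx * mon K μ.right) α := by
  rw [Finsupp.linearCombination_apply]
  rfl

lemma evalS_mapDomain_act (F : Fin r → FreeAlg K X) (a b : FreeMonoid X)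
    (γ : FreeBimod K X r) :
    evalS F (Finsupp.mapDomain (act a b) γ) = mon K a * evalS F γ * mon K b := by
  have hmul : ∀ u v : FreeMonoid X, mon K (u * v) = mon K u * mon K v := map_mul _
  rw [evalS_eq_linearCombination, evalS_eq_linearCombination,
    Finsupp.linearCombination_mapDomain, ← LinearMap.mulRight_apply K (mon K b),
    ← LinearMap.mulLeft_apply K (mon K a), Finsupp.apply_linearCombination,
    Finsupp.apply_linearCombination]
  refine congrArg (fun v => Finsupp.linearCombination K v γ) (funext fun μ => ?_)
  simp only [Function.comp_apply, act, hmul, LinearMap.mulLeft_apply, LinearMap.mulRight_apply,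
    mul_assoc]

end Algebra

section Signatures

variable {K X : Type*} [Field K] {r : ℕ} [LinearOrder (MonMod X r)]

lemma sigW_sub_le (α β : FreeBimod K X r) : sigW (α - β) ≤ max (sigW α) (sigW β) := by
  classical
  exact (Finset.max_mono Finsupp.support_sub).trans_eq Finset.max_union

lemma sigW_smul_le (c : K) (β : FreeBimod K X r) : sigW (c • β) ≤ sigW β :=
  Finset.max_mono Finsupp.support_smul

lemma sigW_mapDomain_act_le
    (hmod : ∀ (a b : FreeMonoid X) (μ ν : MonMod X r), μ ≤ ν → act a b μ ≤ act a b ν)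
    (a b : FreeMonoid X) (γ : FreeBimod K X r) :
    sigW (Finsupp.mapDomain (act a b) γ) ≤ WithBot.map (act a b) (sigW γ) := by
  classical
  refine Finset.max_le fun μ hμ => ?_
  obtain ⟨ν, hν, rfl⟩ := Finset.mem_image.1 (Finsupp.mapDomain_support hμ)
  exact Monotone.withBot_map (fun _ _ => hmod a b _ _) (Finset.le_max hν)

end Signatures

section SReduction

variable {K X : Type*} [Field K] [LinearOrder (FreeMonoid X)] {r : ℕ}

lemma lmon_mem_support {p : FreeAlg K X} (hp : p ≠ 0) : lmon p ∈ p.coeff.support := by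
  rw [lmon, dif_pos (Finsupp.support_nonempty_iff.2 (by simpa using hp))]
  exact Finset.max'_mem _ _

lemma le_lmon {p : FreeAlg K X} {u : FreeMonoid X} (hu : u ∈ p.coeff.support) :
    u ≤ lmon p := by
  rw [lmon, dif_pos ⟨u, hu⟩]
  exact Finset.le_max' _ _ hu

lemma lcoeff_ne_zero {p : FreeAlg K X} (hp : p ≠ 0) : lcoeff p ≠ 0 :=
  Finsupp.mem_support_iff.1 (lmon_mem_support hp)

lemma lmon_eq_of_forall_le {p : FreeAlg K X} {w : FreeMonoid X}
    (hw : ∀ u ∈ p.coeff.support, u ≤ w) (hp : p.coeff w ≠ 0) : lmon p = w :=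
  le_antisymm (hw _ (lmon_mem_support fun h => hp (by simp [h])))
    (le_lmon (Finsupp.mem_support_iff.2 hp))

lemma coeff_sredResult_self {f g : FreeAlg K X} (hg : g ≠ 0) (α γ : FreeBimod K X r)
    (a b : FreeMonoid X) : (sredResult f α g γ a b).1.coeff (a * lmon g * b) = 0 := by
  simp only [sredResult, coeff_sub, coeff_smul, Finsupp.sub_apply, Finsupp.smul_apply,
    coeff_mon_mul_mul_mon, smul_eq_mul]
  rw [show g.coeff (lmon g) = lcoeff g from rfl, inv_mul_cancel_right₀ (lcoeff_ne_zero hg),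
    sub_self]

lemma sredResult_fst_eq_evalS (F : Fin r → FreeAlg K X)
    {f g : FreeAlg K X} {α γ : FreeBimod K X r} (a b : FreeMonoid X)
    (hf : f = evalS F α) (hg : g = evalS F γ) :
    (sredResult f α g γ a b).1 = evalS F (sredResult f α g γ a b).2 := by
  simp only [sredResult]
  rw [hf, hg, ← evalS_mapDomain_act]
  simp only [evalS_eq_linearCombination, map_sub, map_smul]

lemma le_of_mem_support_mon_mul_mul_mon
    (hmon : ∀ a b u v : FreeMonoid X, u ≤ v → a * u * b ≤ a * v * b)
    {a b t : FreeMonoid X} {g : FreeAlg K X}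
    (ht : t ∈ (mon K a * g * mon K b).coeff.support) : t ≤ a * lmon g * b := by
  obtain ⟨u, hu, rfl⟩ := exists_of_mem_support_mon_mul_mul_mon ht
  exact hmon a b _ _ (le_lmon hu)

lemma sredResult_support_le
    (hmon : ∀ a b u v : FreeMonoid X, u ≤ v → a * u * b ≤ a * v * b)
    {f g : FreeAlg K X} {a b w : FreeMonoid X} (hf : ∀ u ∈ f.coeff.support, u ≤ w)
    (ht : a * lmon g * b ≤ w) (α γ : FreeBimod K X r) :
    ∀ u ∈ (sredResult f α g γ a b).1.coeff.support, u ≤ w := by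
  classical
  intro u hu
  simp only [sredResult, coeff_sub, coeff_smul] at hu
  rcases Finset.mem_union.1 (Finsupp.support_sub hu) with hu | hu
  · exact hf u hu
  · exact (le_of_mem_support_mon_mul_mul_mon hmon (Finsupp.support_smul hu)).trans ht

lemma coeff_sredResult_of_lt
    (hmon : ∀ a b u v : FreeMonoid X, u ≤ v → a * u * b ≤ a * v * b)
    {f g : FreeAlg K X} {a b w : FreeMonoid X} (hlt : a * lmon g * b < w)
    (α γ : FreeBimod K X r) : (sredResult f α g γ a b).1.coeff w = f.coeff w := by
  have hw : (mon K a * g * mon K b).coeff w = 0 :=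
    Finsupp.notMem_support_iff.1 fun hw =>
      (le_of_mem_support_mon_mul_mul_mon hmon hw).not_gt hlt
  simp only [sredResult, coeff_sub, coeff_smul, Finsupp.sub_apply, Finsupp.smul_apply, hw,
    smul_zero, sub_zero]

lemma lmon_sredResult_lt
    (hmon : ∀ a b u v : FreeMonoid X, u ≤ v → a * u * b ≤ a * v * b)
    {f g : FreeAlg K X} {α γ : FreeBimod K X r} {a b : FreeMonoid X} (hg : g ≠ 0)
    (htop : a * lmon g * b = lmon f) (hq : (sredResult f α g γ a b).1 ≠ 0) :
    lmon (sredResult f α g γ a b).1 < lmon f := by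
  have hmem := lmon_mem_support hq
  refine lt_of_le_of_ne (sredResult_support_le hmon (fun _ => le_lmon) htop.le α γ _ hmem) ?_
  intro h
  rw [h, ← htop, Finsupp.mem_support_iff] at hmem
  exact hmem (coeff_sredResult_self hg α γ a b)

variable [LinearOrder (MonMod X r)]

lemma sigW_sredResult_le
    (hmod : ∀ (a b : FreeMonoid X) (μ ν : MonMod X r), μ ≤ ν → act a b μ ≤ act a b ν)
    {α γ : FreeBimod K X r} {a b : FreeMonoid X}
    (h : WithBot.map (act a b) (sigW γ) ≤ sigW α) (f g : FreeAlg K X) :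
    sigW (sredResult f α g γ a b).2 ≤ sigW α :=
  (sigW_sub_le _ _).trans <| max_le le_rfl <|
    (sigW_smul_le _ _).trans <| (sigW_mapDomain_act_le hmod a b γ).trans h

lemma TopSRed.mono {G : Set (FreeAlg K X × FreeBimod K X r)} {f f' : FreeAlg K X}
    {α α' : FreeBimod K X r} (h : TopSRed G f α) (hf : lmon f = lmon f')
    (hα : sigW α ≤ sigW α') : TopSRed G f' α' := by
  obtain ⟨g, γ, hgG, hg, a, b, htop, hsig⟩ := h
  exact ⟨g, γ, hgG, hg, a, b, htop.trans hf, hsig.trans hα⟩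

lemma topSRed_of_sredStep
    (hmon : ∀ a b u v : FreeMonoid X, u ≤ v → a * u * b ≤ a * v * b)
    (hmod : ∀ (a b : FreeMonoid X) (μ ν : MonMod X r), μ ≤ ν → act a b μ ≤ act a b ν)
    {G : Set (FreeAlg K X × FreeBimod K X r)} {p q : FreeAlg K X × FreeBimod K X r}
    (hstep : SRedStep G p q) (hp : p.1 ≠ 0) (hq : q.1 ≠ 0 → TopSRed G q.1 q.2) :
    TopSRed G p.1 p.2 := by
  obtain ⟨g, γ, hgG, hg, a, b, hmem, hsig, rfl⟩ := hstep
  rcases (le_lmon hmem).eq_or_lt with htop | hlt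
  · exact ⟨g, γ, hgG, hg, a, b, htop, hsig⟩
  have hcoeff : (sredResult p.1 p.2 g γ a b).1.coeff (lmon p.1) ≠ 0 := by
    rw [coeff_sredResult_of_lt hmon hlt]
    exact lcoeff_ne_zero hp
  have hlmon := lmon_eq_of_forall_le
    (sredResult_support_le hmon (fun _ => le_lmon) hlt.le _ _) hcoeff
  exact (hq fun h => hcoeff (by simp [h])).mono hlmon (sigW_sredResult_le hmod hsig _ _)

lemma topSRed_of_sredToZero
    (hmon : ∀ a b u v : FreeMonoid X, u ≤ v → a * u * b ≤ a * v * b)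
    (hmod : ∀ (a b : FreeMonoid X) (μ ν : MonMod X r), μ ≤ ν → act a b μ ≤ act a b ν)
    {G : Set (FreeAlg K X × FreeBimod K X r)} {p : FreeAlg K X × FreeBimod K X r}
    (h : SRedToZero G p) (hp : p.1 ≠ 0) : TopSRed G p.1 p.2 := by
  obtain ⟨τ, h⟩ := h
  induction h using Relation.ReflTransGen.head_induction_on with
  | refl => exact absurd rfl hp
  | head hstep _ ih => exact topSRed_of_sredStep hmon hmod hstep hp ih

lemma sredToZero_of_forall_topSRed [WellFoundedLT (FreeMonoid X)]
    (hmon : ∀ a b u v : FreeMonoid X, u ≤ v → a * u * b ≤ a * v * b)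
    (hmod : ∀ (a b : FreeMonoid X) (μ ν : MonMod X r), μ ≤ ν → act a b μ ≤ act a b ν)
    {F : Fin r → FreeAlg K X} {G : Set (FreeAlg K X × FreeBimod K X r)} (hG : InLab F G)
    {σ : WithBot (MonMod X r)}
    (htop : ∀ f α, f = evalS F α → f ≠ 0 → sigW α < σ → TopSRed G f α)
    {f : FreeAlg K X} {α : FreeBimod K X r} (hf : f = evalS F α) (hσ : sigW α < σ) :
    SRedToZero G (f, α) := by
  induction hw : lmon f using WellFoundedLT.induction generalizing f α with
  | _ w ih =>
    by_cases hf0 : f = 0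
    · exact ⟨α, hf0 ▸ .refl⟩
    obtain ⟨g, γ, hgG, hg, a, b, htop', hsig⟩ := htop f α hf hf0 hσ
    set q := sredResult f α g γ a b
    have hstep : SRedStep G (f, α) q :=
      ⟨g, γ, hgG, hg, a, b, htop' ▸ lmon_mem_support hf0, hsig, rfl⟩
    suffices hq : SRedToZero G q from
      let ⟨τ, hτ⟩ := hq; ⟨τ, .head hstep hτ⟩
    by_cases hq0 : q.1 = 0
    · exact ⟨q.2, hq0 ▸ .refl⟩
    exact ih _ (hw ▸ lmon_sredResult_lt hmon hg htop' hq0)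
      (sredResult_fst_eq_evalS F a b hf (hG _ hgG).1)
      ((sigW_sredResult_le hmod hsig f g).trans_lt hσ) rfl

end SReduction

theorem labGB_upto_iff_topSRed_general {K X : Type*} [Field K] {r : ℕ}
    [LinearOrder (FreeMonoid X)] [WellFoundedLT (FreeMonoid X)]
    [LinearOrder (MonMod X r)]
    (hmon : ∀ a b u v : FreeMonoid X, u ≤ v → a * u * b ≤ a * v * b)
    (hmod : ∀ (a b : FreeMonoid X) (μ ν : MonMod X r), μ ≤ ν → act a b μ ≤ act a b ν)
    (F : Fin r → FreeAlg K X) (G : Set (FreeAlg K X × FreeBimod K X r))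
    (hG : InLab F G) (σ : MonMod X r) :
    (∀ (f : FreeAlg K X) (α : FreeBimod K X r), f = evalS F α →
        sigW α < (σ : WithBot (MonMod X r)) → SRedToZero G (f, α)) ↔
    (∀ (f : FreeAlg K X) (α : FreeBimod K X r), f = evalS F α → f ≠ 0 →
        sigW α < (σ : WithBot (MonMod X r)) → TopSRed G f α) :=
  ⟨fun hred _ _ hf hf0 hσ => topSRed_of_sredToZero hmon hmod (hred _ _ hf hσ) hf0,
    fun htop _ _ hf hσ => sredToZero_of_forall_topSRed hmon hmod hG htop hf hσ⟩

/-- **Equivalent characterization of labelled Gröbner bases up to a signature.**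
Every `f^[α] ∈ I^[Σ]` with `s(α) ≺ σ` s-reduces to zero by `G^[Σ]` iff every nonzero
`f^[α] ∈ I^[Σ]` with `s(α) ≺ σ` is top s-reducible by `G^[Σ]`. -/
theorem labGB_upto_iff_topSRed {K X : Type*} [Field K] {r : ℕ}
    [LinearOrder (FreeMonoid X)] [WellFoundedLT (FreeMonoid X)]
    [LinearOrder (MonMod X r)] [WellFoundedLT (MonMod X r)]
    (hmon : ∀ a b u v : FreeMonoid X, u ≤ v → a * u * b ≤ a * v * b)
    (hmod : ∀ (a b : FreeMonoid X) (μ ν : MonMod X r), μ ≤ ν → act a b μ ≤ act a b ν)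
    (hcomp : ∀ (u v : FreeMonoid X) (i : Fin r),
      (u ≤ v ↔ (⟨u, i, 1⟩ : MonMod X r) ≤ ⟨v, i, 1⟩) ∧
      (u ≤ v ↔ (⟨1, i, u⟩ : MonMod X r) ≤ ⟨1, i, v⟩))
    (F : Fin r → FreeAlg K X) (G : Set (FreeAlg K X × FreeBimod K X r))
    (hG : InLab F G) (σ : MonMod X r) :
    (∀ (f : FreeAlg K X) (α : FreeBimod K X r), f = evalS F α →
        sigW α < (σ : WithBot (MonMod X r)) → SRedToZero G (f, α)) ↔
    (∀ (f : FreeAlg K X) (α : FreeBimod K X r), f = evalS F α → f ≠ 0 →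
        sigW α < (σ : WithBot (MonMod X r)) → TopSRed G f α) :=
  labGB_upto_iff_topSRed_general hmon hmod F G hG σ
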